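/- In any orthomodular lattice, if a commutes with c and b commutes with c, then (a ∪₃ b) ∪₃ c = a ∪₃ (b ∪₃ c), where x ∪₃ y := (x ∩ y) ∪ (x ∩ y') ∪ (x' ∩ (x ∪ y)). -/

import Mathlib

class Ortholattice (α : Type*) extends Lattice α, BoundedOrder α, Compl α where
  compl_compl : ∀ a : α, aᶜᶜ = a
  sup_compl : ∀ a : α, a ⊔ aᶜ = ⊤
  inf_compl : ∀ a : α, a ⊓ aᶜ = ⊥
  compl_antitone : ∀ a b : α, a ≤ b → bᶜ ≤ aᶜ

class OrthomodularLattice (α : Type*) extends Ortholattice α where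
  orthomodular : ∀ a b : α, a ≤ b → b = a ⊔ (aᶜ ⊓ b)

namespace OMLaux

variable {α : Type*} [OrthomodularLattice α] (a b c : α)

local notation "cc" => Ortholattice.compl_compl (α := α)
local notation "anti" => Ortholattice.compl_antitone (α := α)

lemma le_compl_iff {x y : α} : x ≤ yᶜ ↔ y ≤ xᶜ := by
  constructor
  · intro h; have := anti x yᶜ h; rwa [cc] at this
  · intro h; have := anti y xᶜ h; rwa [cc] at this

lemma compl_sup' (x y : α) : (x ⊔ y)ᶜ = xᶜ ⊓ yᶜ := by
  apply le_antisymm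
  · exact le_inf (anti x (x ⊔ y) le_sup_left) (anti y (x ⊔ y) le_sup_right)
  · exact le_compl_iff.mpr
      (sup_le (le_compl_iff.mpr inf_le_left) (le_compl_iff.mpr inf_le_right))

lemma compl_inf' (x y : α) : (x ⊓ y)ᶜ = xᶜ ⊔ yᶜ := by
  have := compl_sup' (xᶜ) (yᶜ)
  rw [cc, cc] at this
  rw [← this, cc]

lemma inf_compl_bot (x : α) : x ⊓ xᶜ = ⊥ := Ortholattice.inf_compl x

lemma compl_inf_bot (x : α) : xᶜ ⊓ x = ⊥ := by rw [inf_comm]; exact inf_compl_bot x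

lemma om {x y : α} (h : x ≤ y) : y = x ⊔ (xᶜ ⊓ y) :=
  OrthomodularLattice.orthomodular x y h

lemma om1 {u v : α} (h : u ≤ vᶜ) : (u ⊔ v) ⊓ vᶜ = u := by
  have h1 : u ≤ (u ⊔ v) ⊓ vᶜ := le_inf le_sup_left h
  have h2 := om h1
  have h3 : uᶜ ⊓ ((u ⊔ v) ⊓ vᶜ) = ⊥ := by
    apply le_antisymm _ bot_le
    have : uᶜ ⊓ ((u ⊔ v) ⊓ vᶜ) ≤ (u ⊔ v)ᶜ ⊓ (u ⊔ v) := by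
      rw [compl_sup']
      exact le_inf (le_inf inf_le_left (inf_le_right.trans inf_le_right))
        (inf_le_right.trans inf_le_left)
    exact this.trans (le_of_eq (compl_inf_bot _))
  rw [h3, sup_bot_eq] at h2
  exact h2

/-- commutation -/
def Cmm (x y : α) : Prop := x = (x ⊓ y) ⊔ (x ⊓ yᶜ)

lemma cmm_refl (x : α) : Cmm x x := by
  unfold Cmm; rw [inf_idem, inf_compl_bot, sup_bot_eq]

lemma cmm_compl_self (x : α) : Cmm xᶜ x := by
  unfold Cmm; rw [compl_inf_bot, inf_idem, bot_sup_eq]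

lemma cmm_compl_right {x y : α} (h : Cmm x y) : Cmm x yᶜ := by
  unfold Cmm at *; rw [cc, sup_comm]; exact h

lemma cmm_symm {x y : α} (h : Cmm x y) : Cmm y x := by
  unfold Cmm at *
  set z := (y ⊓ x)ᶜ ⊓ y with hz
  have hza : z ≤ xᶜ := by
    rw [le_compl_iff]
    have hzc : zᶜ = (y ⊓ x) ⊔ yᶜ := by rw [hz, compl_inf', cc]
    rw [hzc]
    calc x = (x ⊓ y) ⊔ (x ⊓ yᶜ) := h
    _ ≤ (y ⊓ x) ⊔ yᶜ := sup_le (le_sup_left.trans' (le_inf inf_le_right inf_le_left))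
        (inf_le_right.trans le_sup_right)
  have hb : y = (y ⊓ x) ⊔ z := om inf_le_left
  apply le_antisymm
  · calc y = (y ⊓ x) ⊔ z := hb
    _ ≤ (y ⊓ x) ⊔ (y ⊓ xᶜ) := sup_le le_sup_left
        ((le_inf inf_le_right hza).trans le_sup_right)
  · exact sup_le inf_le_left inf_le_left

lemma cmm_compl_left {x y : α} (h : Cmm x y) : Cmm xᶜ y :=
  cmm_symm (cmm_compl_right (cmm_symm h))

lemma cmm_sup_left {x y z : α} (h1 : Cmm x z) (h2 : Cmm y z) : Cmm (x ⊔ y) z := by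
  unfold Cmm at *
  apply le_antisymm
  · calc x ⊔ y = ((x ⊓ z) ⊔ (x ⊓ zᶜ)) ⊔ ((y ⊓ z) ⊔ (y ⊓ zᶜ)) := by rw [← h1, ← h2]
    _ ≤ ((x ⊔ y) ⊓ z) ⊔ ((x ⊔ y) ⊓ zᶜ) := by
        apply sup_le <;> apply sup_le
        · exact le_sup_left.trans' (inf_le_inf_right _ le_sup_left)
        · exact le_sup_right.trans' (inf_le_inf_right _ le_sup_left)
        · exact le_sup_left.trans' (inf_le_inf_right _ le_sup_right)
        · exact le_sup_right.trans' (inf_le_inf_right _ le_sup_right)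
  · exact sup_le inf_le_left inf_le_left

lemma cmm_inf_left {x y z : α} (h1 : Cmm x z) (h2 : Cmm y z) : Cmm (x ⊓ y) z := by
  have := cmm_compl_left (cmm_sup_left (cmm_compl_left h1) (cmm_compl_left h2))
  rwa [compl_sup', cc, cc] at this

lemma cmm_sup_right {x y z : α} (h1 : Cmm x y) (h2 : Cmm x z) : Cmm x (y ⊔ z) :=
  cmm_symm (cmm_sup_left (cmm_symm h1) (cmm_symm h2))

lemma cmm_inf_right {x y z : α} (h1 : Cmm x y) (h2 : Cmm x z) : Cmm x (y ⊓ z) :=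
  cmm_symm (cmm_inf_left (cmm_symm h1) (cmm_symm h2))

lemma l1 {x y : α} (h : Cmm x y) : x ⊓ (xᶜ ⊔ y) = x ⊓ y := by
  have ht : xᶜ ⊔ y = (x ⊓ yᶜ)ᶜ := by rw [compl_inf', cc]
  rw [ht]
  have hu : x ⊓ y ≤ (x ⊓ yᶜ)ᶜ := le_compl_iff.mpr
    (by rw [compl_inf']; exact inf_le_right.trans le_sup_right)
  calc x ⊓ (x ⊓ yᶜ)ᶜ = ((x ⊓ y) ⊔ (x ⊓ yᶜ)) ⊓ (x ⊓ yᶜ)ᶜ := by rw [← h]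
  _ = x ⊓ y := om1 hu

lemma fh1 {x y z : α} (h1 : Cmm x y) (h2 : Cmm x z) : x ⊓ (y ⊔ z) = (x ⊓ y) ⊔ (x ⊓ z) := by
  set p := (x ⊓ y) ⊔ (x ⊓ z) with hp
  set q := x ⊓ (y ⊔ z) with hq
  have hpq : p ≤ q := sup_le (inf_le_inf_left _ le_sup_left) (inf_le_inf_left _ le_sup_right)
  have key : pᶜ ⊓ q = ⊥ := by
    apply le_antisymm _ bot_le
    have h3 : pᶜ ⊓ q ≤ x ⊓ yᶜ := by
      rw [← l1 (cmm_compl_right h1)]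
      apply le_inf (inf_le_right.trans inf_le_left)
      calc pᶜ ⊓ q ≤ pᶜ := inf_le_left
      _ ≤ (x ⊓ y)ᶜ := anti _ _ le_sup_left
      _ = xᶜ ⊔ yᶜ := compl_inf' _ _
    have h4 : pᶜ ⊓ q ≤ x ⊓ zᶜ := by
      rw [← l1 (cmm_compl_right h2)]
      apply le_inf (inf_le_right.trans inf_le_left)
      calc pᶜ ⊓ q ≤ pᶜ := inf_le_left
      _ ≤ (x ⊓ z)ᶜ := anti _ _ le_sup_right
      _ = xᶜ ⊔ zᶜ := compl_inf' _ _
    have h5 : pᶜ ⊓ q ≤ (y ⊔ z)ᶜ := by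
      rw [compl_sup' y z]
      exact le_inf (h3.trans inf_le_right) (h4.trans inf_le_right)
    calc pᶜ ⊓ q ≤ (y ⊔ z) ⊓ (y ⊔ z)ᶜ :=
          le_inf (inf_le_right.trans inf_le_right) h5
    _ = ⊥ := inf_compl_bot _
  have := om hpq
  rw [key, sup_bot_eq] at this
  exact this

lemma fh2 {x y z : α} (h1 : Cmm z x) (h2 : Cmm z y) : x ⊓ (y ⊔ z) = (x ⊓ y) ⊔ (x ⊓ z) := by
  apply le_antisymm
  · set q := x ⊓ (y ⊔ z) with hqdef
    have hqz : Cmm q z :=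
      cmm_inf_left (cmm_symm h1) (cmm_sup_left (cmm_symm h2) (cmm_refl z))
    have hexp : q = (q ⊓ z) ⊔ (q ⊓ zᶜ) := hqz
    have e1 : q ⊓ z ≤ x ⊓ z := inf_le_inf_right _ inf_le_left
    have e2 : q ⊓ zᶜ ≤ x ⊓ y := by
      have hz : zᶜ ⊓ (y ⊔ z) = zᶜ ⊓ y := by
        rw [fh1 (cmm_compl_left h2) (cmm_compl_self z), compl_inf_bot, sup_bot_eq]
      calc q ⊓ zᶜ ≤ x ⊓ (zᶜ ⊓ (y ⊔ z)) :=
            le_inf (inf_le_left.trans inf_le_left)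
              (le_inf inf_le_right (inf_le_left.trans inf_le_right))
      _ = x ⊓ (zᶜ ⊓ y) := by rw [hz]
      _ ≤ x ⊓ y := inf_le_inf_left _ inf_le_right
    calc q = (q ⊓ z) ⊔ (q ⊓ zᶜ) := hexp
    _ ≤ (x ⊓ y) ⊔ (x ⊓ z) := sup_le (e1.trans le_sup_right) (e2.trans le_sup_left)
  · exact sup_le (inf_le_inf_left _ le_sup_left) (inf_le_inf_left _ le_sup_right)

end OMLaux

open OMLaux in
theorem stmt8 {α : Type*} [OrthomodularLattice α] (a b c : α) (hac : a = (a ⊓ c) ⊔ (a ⊓ cᶜ)) (hbc : b = (b ⊓ c) ⊔ (b ⊓ cᶜ)) :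
    (((a ⊓ b) ⊔ (a ⊓ bᶜ) ⊔ (aᶜ ⊓ (a ⊔ b))) ⊓ c) ⊔ (((a ⊓ b) ⊔ (a ⊓ bᶜ) ⊔ (aᶜ ⊓ (a ⊔ b))) ⊓ cᶜ) ⊔ (((a ⊓ b) ⊔ (a ⊓ bᶜ) ⊔ (aᶜ ⊓ (a ⊔ b)))ᶜ ⊓ (((a ⊓ b) ⊔ (a ⊓ bᶜ) ⊔ (aᶜ ⊓ (a ⊔ b))) ⊔ c)) =
      (a ⊓ ((b ⊓ c) ⊔ (b ⊓ cᶜ) ⊔ (bᶜ ⊓ (b ⊔ c)))) ⊔ (a ⊓ ((b ⊓ c) ⊔ (b ⊓ cᶜ) ⊔ (bᶜ ⊓ (b ⊔ c)))ᶜ) ⊔ (aᶜ ⊓ (a ⊔ ((b ⊓ c) ⊔ (b ⊓ cᶜ) ⊔ (bᶜ ⊓ (b ⊔ c))))) := by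
  have hAC : Cmm a c := hac
  have hBC : Cmm b c := hbc
  have hCA : Cmm c a := cmm_symm hAC
  have hCB : Cmm c b := cmm_symm hBC
  -- inner: b ∪₃ c = b ⊔ c
  have hE : (b ⊓ c) ⊔ (b ⊓ cᶜ) ⊔ (bᶜ ⊓ (b ⊔ c)) = b ⊔ c := by
    rw [← hbc]
    exact (om (le_sup_left : b ≤ b ⊔ c)).symm
  rw [hE]
  set D := (a ⊓ b) ⊔ (a ⊓ bᶜ) ⊔ (aᶜ ⊓ (a ⊔ b)) with hD
  have hDC : Cmm D c := by
    apply cmm_sup_left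
    apply cmm_sup_left
    · exact cmm_inf_left hAC hBC
    · exact cmm_inf_left hAC (cmm_compl_left hBC)
    · exact cmm_inf_left (cmm_compl_left hAC) (cmm_sup_left hAC hBC)
  -- LHS = D ⊔ c
  have hL : (D ⊓ c) ⊔ (D ⊓ cᶜ) ⊔ (Dᶜ ⊓ (D ⊔ c)) = D ⊔ c := by
    rw [← hDC]
    exact (om (le_sup_left : D ≤ D ⊔ c)).symm
  rw [hL]
  -- compute RHS pieces
  have r1 : a ⊓ (b ⊔ c) = (a ⊓ b) ⊔ (a ⊓ c) := fh2 hCA hCB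
  have r2 : (b ⊔ c)ᶜ = bᶜ ⊓ cᶜ := compl_sup' b c
  have r3 : aᶜ ⊓ (a ⊔ (b ⊔ c)) = (aᶜ ⊓ (a ⊔ b)) ⊔ (aᶜ ⊓ c) := by
    rw [← sup_assoc]
    exact fh2 (cmm_compl_right hCA) (cmm_sup_right hCA hCB)
  rw [r1, r2, r3]
  -- a ⊓ bᶜ commutes with c
  have habc : Cmm (a ⊓ bᶜ) c := cmm_inf_left hAC (cmm_compl_left hBC)
  have hX3Y : a ⊓ (bᶜ ⊓ cᶜ) ≤ a ⊓ bᶜ := le_inf inf_le_left (inf_le_right.trans inf_le_left)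
  apply le_antisymm
  · apply sup_le
    · rw [hD]
      apply sup_le
      apply sup_le
      · exact le_sup_of_le_left (le_sup_of_le_left le_sup_left)
      · calc a ⊓ bᶜ = ((a ⊓ bᶜ) ⊓ c) ⊔ ((a ⊓ bᶜ) ⊓ cᶜ) := habc
        _ ≤ _ := by
            apply sup_le
            · exact le_sup_of_le_left (le_sup_of_le_left (le_sup_of_le_right
                (le_inf (inf_le_left.trans inf_le_left) inf_le_right)))
            · exact le_sup_of_le_left (le_sup_of_le_right
                (le_inf (inf_le_left.trans inf_le_left)
                  (le_inf (inf_le_left.trans inf_le_right) inf_le_right)))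
      · exact le_sup_of_le_right le_sup_left
    · calc c = (c ⊓ a) ⊔ (c ⊓ aᶜ) := hCA
      _ ≤ _ := by
          apply sup_le
          · exact le_sup_of_le_left (le_sup_of_le_left (le_sup_of_le_right
              (le_inf inf_le_right inf_le_left)))
          · exact le_sup_of_le_right (le_sup_of_le_right
              (le_inf inf_le_right inf_le_left))
  · apply sup_le
    apply sup_le
    apply sup_le
    · exact le_sup_of_le_left (le_sup_of_le_left le_sup_left)
    · exact le_sup_of_le_right inf_le_right
    · exact le_sup_of_le_left (le_sup_of_le_left (hX3Y.trans le_sup_right))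
    · exact sup_le (le_sup_of_le_left le_sup_right) (le_sup_of_le_right inf_le_right)
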